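/- arXiv:2210.15819 — 4 statements merged into one kernel-verified Lean document; each statement's English description precedes it below -/
import Mathlib

section
/- For a one-parameter exponential family, the map h ↦ TV(P_θ, P_{θ+h}) is monotonically increasing on h ≥ 0: if θ₁ ≤ θ₂ ≤ θ₃ then TV(P_{θ₁}, P_{θ₂}) ≤ TV(P_{θ₁}, P_{θ₃}). -/
open MeasureTheory Real

/-- Sign comparison for exponential family densities. -/
lemma exp_fam_sign_iff (A : ℝ → ℝ) {a b : ℝ} (hab : a < b) (x : ℝ) :
    (A b - A a) / (b - a) ≤ x ↔ Real.exp (a * x - A a) ≤ Real.exp (b * x - A b) := by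
  rw [Real.exp_le_exp, div_le_iff₀ (by linarith)]
  constructor <;> intro h <;> nlinarith

/-- Stochastic dominance on half-lines for exponential families. -/
lemma exp_fam_halfline_mono (μ : Measure ℝ) (A : ℝ → ℝ) {a b : ℝ} (hab : a < b)
    (ha : Integrable (fun x => Real.exp (a * x - A a)) μ)
    (hb : Integrable (fun x => Real.exp (b * x - A b)) μ)
    (na : ∫ x, Real.exp (a * x - A a) ∂μ = 1)
    (nb : ∫ x, Real.exp (b * x - A b) ∂μ = 1) (c : ℝ) :
    ∫ x in Set.Ici c, Real.exp (a * x - A a) ∂μ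
      ≤ ∫ x in Set.Ici c, Real.exp (b * x - A b) ∂μ := by
  set c' := (A b - A a) / (b - a) with hc'
  rcases le_or_gt c' c with h | h
  · exact setIntegral_mono_on ha.integrableOn hb.integrableOn measurableSet_Ici
      fun x hx => (exp_fam_sign_iff A hab x).mp (le_trans h hx)
  · have hcompl : (Set.Ici c)ᶜ = Set.Iio c := by simp
    have ea := integral_add_compl (measurableSet_Ici (a := c)) ha
    have eb := integral_add_compl (measurableSet_Ici (a := c)) hb
    rw [hcompl] at ea eb
    have hIio : ∫ x in Set.Iio c, Real.exp (b * x - A b) ∂μ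
        ≤ ∫ x in Set.Iio c, Real.exp (a * x - A a) ∂μ := by
      apply setIntegral_mono_on hb.integrableOn ha.integrableOn measurableSet_Iio
      intro x hx
      have hx' : ¬ c' ≤ x := by simp only [Set.mem_Iio] at hx; linarith
      have := (exp_fam_sign_iff A hab x).not.mp hx'
      linarith [lt_of_not_ge this]
    linarith [na, nb, ea, eb]

/-- The integral of |g| equals twice the integral of the positive part when ∫ g = 0. -/
lemma abs_integral_eq_two_pospart (μ : Measure ℝ) {g : ℝ → ℝ} (hg : Integrable g μ)
    (h0 : ∫ x, g x ∂μ = 0) :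
    ∫ x, |g x| ∂μ = 2 * ∫ x, max (g x) 0 ∂μ := by
  have hpt : ∀ x, |g x| = 2 * max (g x) 0 - g x := by
    intro x
    rcases le_total (g x) 0 with h | h
    · rw [abs_of_nonpos h, max_eq_right h]; ring
    · rw [abs_of_nonneg h, max_eq_left h]; ring
  calc ∫ x, |g x| ∂μ = ∫ x, (2 * max (g x) 0 - g x) ∂μ := by simp_rw [hpt]
    _ = (∫ x, 2 * max (g x) 0 ∂μ) - ∫ x, g x ∂μ :=
        integral_sub (hg.pos_part.const_mul 2) hg
    _ = 2 * ∫ x, max (g x) 0 ∂μ := by rw [MeasureTheory.integral_const_mul, h0]; ring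

/-- Positive part integral as a set integral over the nonnegativity set. -/
lemma pospart_eq_setIntegral (μ : Measure ℝ) {g : ℝ → ℝ} (hg : Integrable g μ)
    {s : Set ℝ} (hs : MeasurableSet s) (hset : ∀ x, x ∈ s ↔ 0 ≤ g x) :
    ∫ x, max (g x) 0 ∂μ = ∫ x in s, g x ∂μ := by
  rw [← integral_add_compl hs hg.pos_part (μ := μ)]
  have h1 : ∫ x in s, max (g x) 0 ∂μ = ∫ x in s, g x ∂μ :=
    setIntegral_congr_fun hs fun x hx => max_eq_left ((hset x).mp hx)
  have h2 : ∫ x in sᶜ, max (g x) 0 ∂μ = 0 := by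
    have : ∫ x in sᶜ, max (g x) 0 ∂μ = ∫ x in sᶜ, (0 : ℝ) ∂μ := by
      apply setIntegral_congr_fun hs.compl
      intro x hx
      exact max_eq_right (le_of_lt (lt_of_not_ge fun h => hx ((hset x).mpr h)))
    rw [this]; simp
  rw [h1, h2]; ring

/-- For a one-parameter exponential family, the map `h ↦ TV(P_θ, P_{θ+h})` is monotonically
increasing: if `θ₁ ≤ θ₂ ≤ θ₃` then `TV(P_{θ₁}, P_{θ₂}) ≤ TV(P_{θ₁}, P_{θ₃})`. -/
theorem tv_monotone_exponential_family (μ : Measure ℝ) (A : ℝ → ℝ) (θ₁ θ₂ θ₃ : ℝ)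
    (h12 : θ₁ ≤ θ₂) (h23 : θ₂ ≤ θ₃)
    (hnorm : ∀ t ∈ ({θ₁, θ₂, θ₃} : Set ℝ), ∫ x, Real.exp (t * x - A t) ∂μ = 1)
    (hint : ∀ t ∈ ({θ₁, θ₂, θ₃} : Set ℝ), Integrable (fun x => Real.exp (t * x - A t)) μ) :
    (1 / 2) * ∫ x, |Real.exp (θ₁ * x - A θ₁) - Real.exp (θ₂ * x - A θ₂)| ∂μ
      ≤ (1 / 2) * ∫ x, |Real.exp (θ₁ * x - A θ₁) - Real.exp (θ₃ * x - A θ₃)| ∂μ := by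
  have h1 : Integrable (fun x => Real.exp (θ₁ * x - A θ₁)) μ := hint θ₁ (by simp)
  have h2 : Integrable (fun x => Real.exp (θ₂ * x - A θ₂)) μ := hint θ₂ (by simp)
  have h3 : Integrable (fun x => Real.exp (θ₃ * x - A θ₃)) μ := hint θ₃ (by simp)
  have n1 : ∫ x, Real.exp (θ₁ * x - A θ₁) ∂μ = 1 := hnorm θ₁ (by simp)
  have n2 : ∫ x, Real.exp (θ₂ * x - A θ₂) ∂μ = 1 := hnorm θ₂ (by simp)
  have n3 : ∫ x, Real.exp (θ₃ * x - A θ₃) ∂μ = 1 := hnorm θ₃ (by simp)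
  -- RHS rewritten via positive part
  have hg3 : Integrable (fun x => Real.exp (θ₃ * x - A θ₃) - Real.exp (θ₁ * x - A θ₁)) μ :=
    h3.sub h1
  have hg3' : ∫ x, (Real.exp (θ₃ * x - A θ₃) - Real.exp (θ₁ * x - A θ₁)) ∂μ = 0 := by
    rw [integral_sub h3 h1, n3, n1]; ring
  have habs3 : ∫ x, |Real.exp (θ₁ * x - A θ₁) - Real.exp (θ₃ * x - A θ₃)| ∂μ
      = 2 * ∫ x, max (Real.exp (θ₃ * x - A θ₃) - Real.exp (θ₁ * x - A θ₁)) 0 ∂μ := by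
    rw [← abs_integral_eq_two_pospart μ hg3 hg3']
    congr 1; funext x; rw [abs_sub_comm]
  rcases eq_or_lt_of_le h12 with heq | hlt12
  · -- θ₁ = θ₂ : LHS is 0
    subst heq
    have hL : ∫ x, |Real.exp (θ₁ * x - A θ₁) - Real.exp (θ₁ * x - A θ₁)| ∂μ = 0 := by
      simp
    rw [hL, habs3]
    have : 0 ≤ ∫ x, max (Real.exp (θ₃ * x - A θ₃) - Real.exp (θ₁ * x - A θ₁)) 0 ∂μ :=
      integral_nonneg fun x => le_max_right _ _
    linarith
  · -- θ₁ < θ₂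
    set c := (A θ₂ - A θ₁) / (θ₂ - θ₁) with hc
    have hg2 : Integrable (fun x => Real.exp (θ₂ * x - A θ₂) - Real.exp (θ₁ * x - A θ₁)) μ :=
      h2.sub h1
    have hg2' : ∫ x, (Real.exp (θ₂ * x - A θ₂) - Real.exp (θ₁ * x - A θ₁)) ∂μ = 0 := by
      rw [integral_sub h2 h1, n2, n1]; ring
    have habs2 : ∫ x, |Real.exp (θ₁ * x - A θ₁) - Real.exp (θ₂ * x - A θ₂)| ∂μ
        = 2 * ∫ x, max (Real.exp (θ₂ * x - A θ₂) - Real.exp (θ₁ * x - A θ₁)) 0 ∂μ := by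
      rw [← abs_integral_eq_two_pospart μ hg2 hg2']
      congr 1; funext x; rw [abs_sub_comm]
    have hsetpos : ∫ x, max (Real.exp (θ₂ * x - A θ₂) - Real.exp (θ₁ * x - A θ₁)) 0 ∂μ
        = ∫ x in Set.Ici c, (Real.exp (θ₂ * x - A θ₂) - Real.exp (θ₁ * x - A θ₁)) ∂μ := by
      apply pospart_eq_setIntegral μ hg2 measurableSet_Ici
      intro x
      rw [Set.mem_Ici, sub_nonneg]
      exact exp_fam_sign_iff A hlt12 x
    -- stochastic dominance: ∫_Ici f₂ ≤ ∫_Ici f₃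
    have hdom : ∫ x in Set.Ici c, Real.exp (θ₂ * x - A θ₂) ∂μ
        ≤ ∫ x in Set.Ici c, Real.exp (θ₃ * x - A θ₃) ∂μ := by
      rcases eq_or_lt_of_le h23 with heq | hlt23
      · subst heq; exact le_refl _
      · exact exp_fam_halfline_mono μ A hlt23 h2 h3 n2 n3 c
    have step1 : ∫ x in Set.Ici c, (Real.exp (θ₂ * x - A θ₂) - Real.exp (θ₁ * x - A θ₁)) ∂μ
        ≤ ∫ x in Set.Ici c, (Real.exp (θ₃ * x - A θ₃) - Real.exp (θ₁ * x - A θ₁)) ∂μ := by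
      rw [integral_sub h2.integrableOn h1.integrableOn,
          integral_sub h3.integrableOn h1.integrableOn]
      linarith [hdom]
    have step2 : ∫ x in Set.Ici c, (Real.exp (θ₃ * x - A θ₃) - Real.exp (θ₁ * x - A θ₁)) ∂μ
        ≤ ∫ x, max (Real.exp (θ₃ * x - A θ₃) - Real.exp (θ₁ * x - A θ₁)) 0 ∂μ := by
      calc ∫ x in Set.Ici c, (Real.exp (θ₃ * x - A θ₃) - Real.exp (θ₁ * x - A θ₁)) ∂μ
          ≤ ∫ x in Set.Ici c,
              max (Real.exp (θ₃ * x - A θ₃) - Real.exp (θ₁ * x - A θ₁)) 0 ∂μ :=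
            setIntegral_mono_on hg3.integrableOn hg3.pos_part.integrableOn
              measurableSet_Ici fun x _ => le_max_left _ _
        _ ≤ ∫ x, max (Real.exp (θ₃ * x - A θ₃) - Real.exp (θ₁ * x - A θ₁)) 0 ∂μ :=
            setIntegral_le_integral hg3.pos_part
              (Filter.Eventually.of_forall fun x => le_max_right _ _)
    rw [habs2, habs3, hsetpos]
    linarith [step1, step2]
end

section
/- For a one-parameter exponential family, define the moment generating function control: for any 0 < λ ≤ κ(θ), where κ(θ) = max{r : ∀θ' ∈ [θ−r, θ+r], A''(θ)/A''(θ') ∈ [1/2, 2]}, one has E_{P_θ}[exp(λ|X − A'(θ)|)] ≤ 2 exp(λ² A''(θ)). -/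
open MeasureTheory Real

/-! Bound `exp (λ |x - A'(θ)|)` by `exp (λ (x - A'(θ))) + exp (-λ (x - A'(θ)))`; integrated against
`P_θ`, the two terms are the moment generating function of `X - A'(θ)` at `±λ`, namely
`exp (A (θ ± λ) - A θ ∓ λ A'(θ))`. Since `A'' ≤ 2 A''(θ)` on `[θ - λ, θ + λ]`, the function
`A''(θ) (t - θ)² - A t` is convex there, so `A` lies below its tangent at `θ` plus
`A''(θ) (t - θ)²`, and each exponent is at most `λ² A''(θ)`. -/

theorem ConvexOn.add_deriv_mul_sub_le {S : Set ℝ} {f : ℝ → ℝ} {x y f' : ℝ}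
    (hfc : ConvexOn ℝ S f) (hx : x ∈ S) (hy : y ∈ S) (hf : HasDerivAt f f' x) :
    f x + f' * (y - x) ≤ f y := by
  rcases lt_trichotomy x y with hxy | rfl | hyx
  · have := hfc.le_slope_of_hasDerivAt hx hy hxy hf
    rw [slope_def_field, le_div_iff₀ (sub_pos.2 hxy)] at this
    linarith
  · simp
  · have := hfc.slope_le_of_hasDerivAt hy hx hyx hf
    rw [slope_def_field, div_le_iff₀ (sub_pos.2 hyx)] at this
    linarith

theorem sub_sub_mul_deriv_le_of_deriv2_le {S : Set ℝ} (hS : Convex ℝ S) {f f' f'' : ℝ → ℝ}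
    {a b C : ℝ} (ha : a ∈ S) (hb : b ∈ S) (hf : ∀ x ∈ S, HasDerivAt f (f' x) x)
    (hf' : ∀ x ∈ S, HasDerivAt f' (f'' x) x) (hC : ∀ x ∈ S, f'' x ≤ C) :
    f b - f a - (b - a) * f' a ≤ C / 2 * (b - a) ^ 2 := by
  set g : ℝ → ℝ := fun x => C / 2 * (x - a) ^ 2 - f x
  have hg : ∀ x ∈ S, HasDerivAt g (C * (x - a) - f' x) x := fun x hx => by
    refine ((((hasDerivAt_id x).sub_const a).pow 2).const_mul (C / 2)).sub (hf x hx)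
      |>.congr_deriv ?_
    simp only [id]
    ring
  have hg' : ∀ x ∈ S, HasDerivAt (fun x => C * (x - a) - f' x) (C - f'' x) x := fun x hx => by
    refine (((hasDerivAt_id x).sub_const a).const_mul C).sub (hf' x hx) |>.congr_deriv ?_
    ring
  have hconvex : ConvexOn ℝ S g :=
    convexOn_of_hasDerivWithinAt2_nonneg hS
      (fun x hx => (hg x hx).continuousAt.continuousWithinAt)
      (fun x hx => (hg x (interior_subset hx)).hasDerivWithinAt)
      (fun x hx => (hg' x (interior_subset hx)).hasDerivWithinAt)
      (fun x hx => sub_nonneg.2 (hC x (interior_subset hx)))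
  have htangent := hconvex.add_deriv_mul_sub_le ha hb (hg a ha)
  simp only [g, sub_self] at htangent
  nlinarith

theorem exp_mul_abs_le (lam y : ℝ) : exp (lam * |y|) ≤ exp (lam * y) + exp (-(lam * y)) :=
  calc exp (lam * |y|) ≤ exp |lam * y| := by
        rw [abs_mul]
        gcongr
        exact le_abs_self lam
    _ ≤ exp (lam * y) + exp (-(lam * y)) := exp_abs_le _

theorem integral_exp_mul_abs_sub_mul_exp_le {μ : Measure ℝ} {θ lam m a : ℝ}
    (hp : Integrable (fun x => exp ((θ + lam) * x)) μ)
    (hm : Integrable (fun x => exp ((θ - lam) * x)) μ) :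
    ∫ x, exp (lam * |x - m|) * exp (θ * x - a) ∂μ ≤
      exp (-(lam * m) - a) * ∫ x, exp ((θ + lam) * x) ∂μ
        + exp (lam * m - a) * ∫ x, exp ((θ - lam) * x) ∂μ := by
  set g : ℝ → ℝ := fun x =>
    exp (-(lam * m) - a) * exp ((θ + lam) * x) + exp (lam * m - a) * exp ((θ - lam) * x)
  have hg : Integrable g μ := (hp.const_mul _).add (hm.const_mul _)
  have hle : ∀ x, exp (lam * |x - m|) * exp (θ * x - a) ≤ g x := fun x =>
    calc exp (lam * |x - m|) * exp (θ * x - a)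
        ≤ (exp (lam * (x - m)) + exp (-(lam * (x - m)))) * exp (θ * x - a) := by
          gcongr
          exact exp_mul_abs_le lam (x - m)
      _ = g x := by
          simp only [g, add_mul, ← exp_add]
          ring_nf
  have hint : Integrable (fun x => exp (lam * |x - m|) * exp (θ * x - a)) μ :=
    hg.mono' (by fun_prop) (.of_forall fun x => by
      rw [norm_of_nonneg (by positivity)]
      exact hle x)
  calc ∫ x, exp (lam * |x - m|) * exp (θ * x - a) ∂μ ≤ ∫ x, g x ∂μ := integral_mono hint hg hle
    _ = _ := by
      rw [integral_add (hp.const_mul _) (hm.const_mul _), integral_const_mul, integral_const_mul]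

/-- MGF control for exponential families: for `0 < λ ≤ κ(θ)` (i.e. the variance `A''`
is 2-stable on `[θ−λ, θ+λ]`), `E_{P_θ}[exp(λ|X − A'(θ)|)] ≤ 2·exp(λ²·A''(θ))`. -/
theorem mgf_control_exponential_family (μ : Measure ℝ) (A A' A'' : ℝ → ℝ) (θ lam : ℝ)
    (hlam : 0 < lam)
    (hA : ∀ t ∈ Set.Icc (θ - lam) (θ + lam), A t = Real.log (∫ x, Real.exp (t * x) ∂μ))
    (hΦ : ∀ t ∈ Set.Icc (θ - lam) (θ + lam), Integrable (fun x => Real.exp (t * x)) μ)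
    (hA' : ∀ t ∈ Set.Icc (θ - lam) (θ + lam), HasDerivAt A (A' t) t)
    (hA'' : ∀ t ∈ Set.Icc (θ - lam) (θ + lam), HasDerivAt A' (A'' t) t)
    (hstab : ∀ t ∈ Set.Icc (θ - lam) (θ + lam),
        0 < A'' t ∧ A'' θ / A'' t ∈ Set.Icc (1 / 2 : ℝ) 2) :
    ∫ x, Real.exp (lam * |x - A' θ|) * Real.exp (θ * x - A θ) ∂μ
      ≤ 2 * Real.exp (lam ^ 2 * A'' θ) := by
  have hθ : θ ∈ Set.Icc (θ - lam) (θ + lam) := ⟨by linarith, by linarith⟩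
  have hplus : θ + lam ∈ Set.Icc (θ - lam) (θ + lam) := ⟨by linarith, le_rfl⟩
  have hminus : θ - lam ∈ Set.Icc (θ - lam) (θ + lam) := ⟨le_rfl, by linarith⟩
  have hA''_le : ∀ t ∈ Set.Icc (θ - lam) (θ + lam), A'' t ≤ 2 * A'' θ := fun t ht => by
    have := (hstab t ht).2.1
    rw [le_div_iff₀ (hstab t ht).1] at this
    linarith
  have hplus_le :=
    sub_sub_mul_deriv_le_of_deriv2_le (convex_Icc _ _) hθ hplus hA' hA'' hA''_le
  have hminus_le :=
    sub_sub_mul_deriv_le_of_deriv2_le (convex_Icc _ _) hθ hminus hA' hA'' hA''_le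
  calc ∫ x, exp (lam * |x - A' θ|) * exp (θ * x - A θ) ∂μ
      ≤ exp (-(lam * A' θ) - A θ) * exp (A (θ + lam))
        + exp (lam * A' θ - A θ) * exp (A (θ - lam)) := by
        refine (integral_exp_mul_abs_sub_mul_exp_le (hΦ _ hplus) (hΦ _ hminus)).trans ?_
        rw [hA _ hplus, hA _ hminus]
        gcongr <;> exact le_exp_log _
    _ = exp (A (θ + lam) - A θ - lam * A' θ) + exp (A (θ - lam) - A θ + lam * A' θ) := by
        rw [← exp_add, ← exp_add]
        ring_nf
    _ ≤ exp (lam ^ 2 * A'' θ) + exp (lam ^ 2 * A'' θ) := by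
        gcongr <;> nlinarith
    _ = 2 * exp (lam ^ 2 * A'' θ) := by ring
end

section
/- Concentration for exponential families: for every θ ∈ Φ and β ∈ (0,1], P_{X∼P_θ}( |X − A'(θ)| ≥ 2·sqrt(A''(θ))·sqrt(ln(2/β)) + ln(2/β)/κ(θ) ) ≤ β. -/
open MeasureTheory Real

/-!
The tilted density `exp (θ x - A θ)` has moment generating function `exp (A (θ + s) - A θ)`,
so a Chernoff bound at `s = ±λ` controls the tail beyond `A' θ ± t` by
`exp (A (θ ± λ) - A θ - λ t ∓ λ A' θ)`.
As long as `|λ| ≤ κ` the variance `A''` stays below `2 A'' θ`, and a second-order Taylor bound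
turns this into `exp (λ² A'' θ - λ t)`. The choice `λ = min κ (√(log (2/β)) / √(A'' θ))`
makes the exponent at most `-log (2/β)`, so each tail has mass at most `β / 2`.
-/

lemma ConvexOn.add_mul_sub_le_of_hasDerivAt {S : Set ℝ} {f : ℝ → ℝ} {f' x y : ℝ}
    (hfc : ConvexOn ℝ S f) (hx : x ∈ S) (hy : y ∈ S) (hf : HasDerivAt f f' x) :
    f x + f' * (y - x) ≤ f y := by
  rcases lt_trichotomy x y with hxy | rfl | hyx
  · have := hfc.le_slope_of_hasDerivAt hx hy hxy hf
    rw [slope_def_field, le_div_iff₀ (sub_pos.2 hxy)] at this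
    linarith
  · simp
  · have := hfc.slope_le_of_hasDerivAt hy hx hyx hf
    rw [slope_def_field, div_le_iff₀ (sub_pos.2 hyx)] at this
    linarith

lemma Convex.le_add_mul_add_sq_of_hasDerivAt2_le {D : Set ℝ} (hD : Convex ℝ D)
    {f f' f'' : ℝ → ℝ} {M a b : ℝ}
    (hf : ∀ x ∈ D, HasDerivAt f (f' x) x) (hf' : ∀ x ∈ D, HasDerivAt f' (f'' x) x)
    (hM : ∀ x ∈ D, f'' x ≤ M) (ha : a ∈ D) (hb : b ∈ D) :
    f b ≤ f a + f' a * (b - a) + M / 2 * (b - a) ^ 2 := by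
  have hg : ∀ x ∈ D, HasDerivAt (fun y => M / 2 * y ^ 2 - f y) (M * x - f' x) x := fun x hx => by
    refine (((hasDerivAt_pow 2 x).const_mul (M / 2)).sub (hf x hx)).congr_deriv ?_
    push_cast; ring
  have hg' : ∀ x ∈ D, HasDerivAt (fun y => M * y - f' y) (M - f'' x) x := fun x hx => by
    refine (((hasDerivAt_id x).const_mul M).sub (hf' x hx)).congr_deriv ?_
    simp
  have hconv : ConvexOn ℝ D (fun y => M / 2 * y ^ 2 - f y) :=
    convexOn_of_hasDerivWithinAt2_nonneg hD
      (fun x hx => (hg x hx).continuousAt.continuousWithinAt)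
      (fun x hx => (hg x (interior_subset hx)).hasDerivWithinAt)
      (fun x hx => (hg' x (interior_subset hx)).hasDerivWithinAt)
      (fun x hx => sub_nonneg.2 (hM x (interior_subset hx)))
  have := hconv.add_mul_sub_le_of_hasDerivAt ha hb (hg a ha)
  linear_combination this

lemma setIntegral_exp_mul_le_of_forall_mul_le (μ : Measure ℝ) {S : Set ℝ}
    (hS : MeasurableSet S) {θ s c : ℝ} (hθ : Integrable (fun x => exp (θ * x)) μ)
    (hθs : Integrable (fun x => exp ((θ + s) * x)) μ) (hsc : ∀ x ∈ S, s * c ≤ s * x) :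
    ∫ x in S, exp (θ * x) ∂μ ≤ exp (-(s * c)) * ∫ x, exp ((θ + s) * x) ∂μ := by
  have hg : Integrable (fun x => exp (-(s * c)) * exp ((θ + s) * x)) μ := hθs.const_mul _
  calc ∫ x in S, exp (θ * x) ∂μ
      ≤ ∫ x in S, exp (-(s * c)) * exp ((θ + s) * x) ∂μ :=
        setIntegral_mono_on hθ.integrableOn hg.integrableOn hS fun x hx => by
          rw [← exp_add]; exact exp_le_exp.2 (by linarith [hsc x hx])
    _ ≤ ∫ x, exp (-(s * c)) * exp ((θ + s) * x) ∂μ :=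
        setIntegral_le_integral hg (ae_of_all _ fun x => by positivity)
    _ = exp (-(s * c)) * ∫ x, exp ((θ + s) * x) ∂μ := integral_const_mul _ _

lemma setIntegral_exp_mul_sub_le_of_forall_mul_le (μ : Measure ℝ) (A : ℝ → ℝ) {S : Set ℝ}
    (hS : MeasurableSet S) {θ s c : ℝ} (hθ : Integrable (fun x => exp (θ * x)) μ)
    (hθs : Integrable (fun x => exp ((θ + s) * x)) μ)
    (hA : A (θ + s) = log (∫ x, exp ((θ + s) * x) ∂μ)) (hsc : ∀ x ∈ S, s * c ≤ s * x) :
    ∫ x in S, exp (θ * x - A θ) ∂μ ≤ exp (A (θ + s) - A θ - s * c) := by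
  -- only `≤`: for `μ = 0` the junk value `log 0 = 0` gives `exp (A (θ + s)) = 1`
  have hZ : ∫ x, exp ((θ + s) * x) ∂μ ≤ exp (A (θ + s)) := hA ▸ le_exp_log _
  calc ∫ x in S, exp (θ * x - A θ) ∂μ = (∫ x in S, exp (θ * x) ∂μ) / exp (A θ) := by
        simp only [exp_sub, integral_div]
    _ ≤ exp (-(s * c)) * exp (A (θ + s)) / exp (A θ) := by
        gcongr
        exact (setIntegral_exp_mul_le_of_forall_mul_le μ hS hθ hθs hsc).trans
          (mul_le_mul_of_nonneg_left hZ (exp_pos _).le)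
    _ = exp (A (θ + s) - A θ - s * c) := by
        rw [← exp_add, ← exp_sub]; ring_nf

lemma min_sq_mul_sq_sub_min_mul_le_neg {κ σ L : ℝ} (hκ : 0 < κ) (hσ : 0 < σ) (hL : 0 ≤ L) :
    min κ (√L / σ) ^ 2 * σ ^ 2 - min κ (√L / σ) * (2 * σ * √L + L / κ) ≤ -L := by
  have hsqrtL : √L * √L = L := mul_self_sqrt hL
  rcases le_total κ (√L / σ) with h | h
  · rw [min_eq_left h]
    have hκσ : κ * σ ≤ √L := (le_div_iff₀ hσ).1 h
    have : κ * (L / κ) = L := mul_div_cancel₀ L hκ.ne'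
    nlinarith [mul_pos hκ hσ]
  · have hlσ : √L / σ * σ = √L := div_mul_cancel₀ _ hσ.ne'
    have hlL : 0 ≤ √L / σ * (L / κ) := by positivity
    calc min κ (√L / σ) ^ 2 * σ ^ 2 - min κ (√L / σ) * (2 * σ * √L + L / κ)
        = (√L / σ * σ) ^ 2 - 2 * (√L / σ * σ) * √L - √L / σ * (L / κ) := by
          rw [min_eq_right h]; ring
      _ ≤ -L := by rw [hlσ]; nlinarith

lemma setIntegral_exp_mul_sub_le_of_deriv2_le (μ : Measure ℝ) {A A' A'' : ℝ → ℝ}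
    {θ κ s c V : ℝ} {S : Set ℝ} (hS : MeasurableSet S) (hs : |s| ≤ κ)
    (hA : ∀ t ∈ Set.Icc (θ - κ) (θ + κ), A t = log (∫ x, exp (t * x) ∂μ))
    (hΦ : ∀ t ∈ Set.Icc (θ - κ) (θ + κ), Integrable (fun x => exp (t * x)) μ)
    (hA' : ∀ t ∈ Set.Icc (θ - κ) (θ + κ), HasDerivAt A (A' t) t)
    (hA'' : ∀ t ∈ Set.Icc (θ - κ) (θ + κ), HasDerivAt A' (A'' t) t)
    (hV : ∀ t ∈ Set.Icc (θ - κ) (θ + κ), A'' t ≤ 2 * V) (hsc : ∀ x ∈ S, s * c ≤ s * x) :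
    ∫ x in S, exp (θ * x - A θ) ∂μ ≤ exp (s ^ 2 * V - s * (c - A' θ)) := by
  obtain ⟨hκs, hsκ⟩ := abs_le.1 hs
  have hθ : θ ∈ Set.Icc (θ - κ) (θ + κ) := ⟨by linarith, by linarith⟩
  have hθs : θ + s ∈ Set.Icc (θ - κ) (θ + κ) := ⟨by linarith, by linarith⟩
  have htaylor := (convex_Icc _ _).le_add_mul_add_sq_of_hasDerivAt2_le hA' hA'' hV hθ hθs
  calc ∫ x in S, exp (θ * x - A θ) ∂μ ≤ exp (A (θ + s) - A θ - s * c) :=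
        setIntegral_exp_mul_sub_le_of_forall_mul_le μ A hS (hΦ θ hθ) (hΦ _ hθs) (hA _ hθs) hsc
    _ ≤ exp (s ^ 2 * V - s * (c - A' θ)) := by
        refine exp_le_exp.2 ?_
        simp only [add_sub_cancel_left] at htaylor
        linarith

lemma setIntegral_le_abs_sub_eq_add (μ : Measure ℝ) {f : ℝ → ℝ} (hf : Integrable f μ)
    {m t : ℝ} (ht : 0 < t) :
    ∫ x in {x | t ≤ |x - m|}, f x ∂μ =
      ∫ x in Set.Ici (m + t), f x ∂μ + ∫ x in Set.Iic (m - t), f x ∂μ := by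
  have hunion : {x | t ≤ |x - m|} = Set.Ici (m + t) ∪ Set.Iic (m - t) := by
    ext x
    simp only [Set.mem_ofPred_eq, le_abs, Set.mem_union, Set.mem_Ici, Set.mem_Iic]
    constructor <;> rintro (h | h) <;> [left; right; left; right] <;> linarith
  have hdisj : Disjoint (Set.Ici (m + t)) (Set.Iic (m - t)) :=
    Set.disjoint_left.2 fun x h₁ h₂ => by
      linarith [Set.mem_Ici.1 h₁, Set.mem_Iic.1 h₂]
  rw [hunion, setIntegral_union hdisj measurableSet_Iic hf.integrableOn hf.integrableOn]

/-- Concentration for exponential families: for every `θ ∈ Φ` and `β ∈ (0,1]`,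
`P_{X∼P_θ}(|X − A'(θ)| ≥ 2·√(A''(θ))·√(ln(2/β)) + ln(2/β)/κ(θ)) ≤ β`,
where `κ(θ)` is a radius within which the variance `A''` is 2-stable. -/
theorem concentration_exponential_family (μ : Measure ℝ) (A A' A'' : ℝ → ℝ) (θ κ β : ℝ)
    (hβ : β ∈ Set.Ioc (0 : ℝ) 1) (hκ : 0 < κ)
    (hA : ∀ t ∈ Set.Icc (θ - κ) (θ + κ), A t = Real.log (∫ x, Real.exp (t * x) ∂μ))
    (hΦ : ∀ t ∈ Set.Icc (θ - κ) (θ + κ), Integrable (fun x => Real.exp (t * x)) μ)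
    (hA' : ∀ t ∈ Set.Icc (θ - κ) (θ + κ), HasDerivAt A (A' t) t)
    (hA'' : ∀ t ∈ Set.Icc (θ - κ) (θ + κ), HasDerivAt A' (A'' t) t)
    (hstab : ∀ t ∈ Set.Icc (θ - κ) (θ + κ),
        0 < A'' t ∧ A'' θ / A'' t ∈ Set.Icc (1 / 2 : ℝ) 2) :
    ∫ x in {x : ℝ |
        2 * Real.sqrt (A'' θ) * Real.sqrt (Real.log (2 / β)) + Real.log (2 / β) / κ
          ≤ |x - A' θ|},
      Real.exp (θ * x - A θ) ∂μ ≤ β := by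
  obtain ⟨hβ0, hβ1⟩ := hβ
  set L := log (2 / β)
  set σ := √(A'' θ)
  set t := 2 * σ * √L + L / κ
  set l := min κ (√L / σ)
  have hL : 0 < L := log_pos (by rw [lt_div_iff₀ hβ0]; linarith)
  have hθ : θ ∈ Set.Icc (θ - κ) (θ + κ) := ⟨by linarith, by linarith⟩
  have hσ : 0 < σ := sqrt_pos.2 (hstab θ hθ).1
  have hl : 0 < l := lt_min hκ (by positivity)
  have hV : ∀ u ∈ Set.Icc (θ - κ) (θ + κ), A'' u ≤ 2 * A'' θ := fun u hu => by
    obtain ⟨hpos, hhalf, -⟩ := hstab u hu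
    linarith [(le_div_iff₀ hpos).1 hhalf]
  have htail : ∀ (s c : ℝ) (S : Set ℝ), MeasurableSet S → |s| = l →
      s * (c - A' θ) = l * t → (∀ x ∈ S, s * c ≤ s * x) →
      ∫ x in S, exp (θ * x - A θ) ∂μ ≤ β / 2 := fun s c S hS hsl hst hsc => calc
    _ ≤ exp (s ^ 2 * A'' θ - s * (c - A' θ)) :=
        setIntegral_exp_mul_sub_le_of_deriv2_le μ hS (hsl ▸ min_le_left _ _) hA hΦ hA' hA'' hV hsc
    _ = exp (l ^ 2 * σ ^ 2 - l * t) := by rw [sq_sqrt (hstab θ hθ).1.le, ← sq_abs s, hsl, hst]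
    _ ≤ exp (-L) := exp_le_exp.2 (min_sq_mul_sq_sub_min_mul_le_neg hκ hσ hL.le)
    _ = β / 2 := by rw [exp_neg, exp_log (by positivity), inv_div]
  have hf : Integrable (fun x => exp (θ * x - A θ)) μ := by
    simpa only [exp_sub] using (hΦ θ hθ).div_const (exp (A θ))
  rw [setIntegral_le_abs_sub_eq_add μ hf (by positivity)]
  have hupper := htail l (A' θ + t) (Set.Ici _) measurableSet_Ici (abs_of_pos hl) (by ring)
    fun x hx => mul_le_mul_of_nonneg_left (Set.mem_Ici.1 hx) hl.le
  have hlower := htail (-l) (A' θ - t) (Set.Iic _) measurableSet_Iic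
    (by rw [abs_neg, abs_of_pos hl]) (by ring)
    fun x hx => mul_le_mul_of_nonpos_left (Set.mem_Iic.1 hx) (neg_nonpos.2 hl.le)
  linarith
end

section
/- For a one-parameter exponential family, if |A'(θ') − A'(θ)| ≤ (1/2)·A''(θ)·κ(θ), then |θ' − θ| ≤ κ(θ) (i.e., θ' lies in the interval Φ(θ) = [θ − κ(θ), θ + κ(θ)]). -/
open Real

/-!
On `[θ - κ, θ + κ]` the stability condition gives `A'' ≥ A''(θ)/2`, so by the mean value theorem
`A'` climbs by at least `A''(θ) κ / 2` from `θ - κ` to `θ` and from `θ` to `θ + κ`. Hence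
`A'(θ')` lies between `A'(θ - κ)` and `A'(θ + κ)`, and strict monotonicity of `A'` puts `θ'`
between `θ - κ` and `θ + κ`.
-/

theorem mul_sub_le_sub_of_hasDerivAt_of_le {f f' : ℝ → ℝ} {a b C : ℝ}
    (hf : ∀ t, HasDerivAt f (f' t) t) (hC : ∀ t ∈ Set.Icc a b, C ≤ f' t) (hab : a ≤ b) :
    C * (b - a) ≤ f b - f a :=
  (convex_Icc a b).mul_sub_le_image_sub_of_le_deriv
    (fun t _ ↦ (hf t).continuousAt.continuousWithinAt)
    (fun t _ ↦ (hf t).differentiableAt.differentiableWithinAt)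
    (fun t ht ↦ (hf t).deriv ▸ hC t (interior_subset ht))
    a ⟨le_rfl, hab⟩ b ⟨hab, le_rfl⟩ hab

theorem half_le_of_div_le_two {a b : ℝ} (hb : 0 < b) (h : a / b ≤ 2) : a / 2 ≤ b := by
  rw [div_le_iff₀ hb] at h
  linarith

/-- For a one-parameter exponential family, if `|A'(θ') − A'(θ)| ≤ (1/2)·A''(θ)·κ(θ)`,
then `|θ' − θ| ≤ κ(θ)`, i.e. `θ'` lies in `Φ(θ) = [θ − κ(θ), θ + κ(θ)]`. -/
theorem mean_close_implies_param_close (A' A'' : ℝ → ℝ) (θ θ' κ : ℝ) (hκ : 0 < κ)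
    (hA'' : ∀ t, HasDerivAt A' (A'' t) t)
    (hpos : ∀ t, 0 < A'' t)
    (hstab : ∀ t ∈ Set.Icc (θ - κ) (θ + κ), A'' θ / A'' t ∈ Set.Icc (1 / 2 : ℝ) 2)
    (hclose : |A' θ' - A' θ| ≤ (1 / 2) * A'' θ * κ) :
    |θ' - θ| ≤ κ := by
  have hlow : ∀ t ∈ Set.Icc (θ - κ) (θ + κ), A'' θ / 2 ≤ A'' t := fun t ht ↦
    half_le_of_div_le_two (hpos t) (hstab t ht).2
  have hleft := mul_sub_le_sub_of_hasDerivAt_of_le hA''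
    (fun t ht ↦ hlow t (Set.Icc_subset_Icc le_rfl (by linarith) ht)) (by linarith : θ - κ ≤ θ)
  have hright := mul_sub_le_sub_of_hasDerivAt_of_le hA''
    (fun t ht ↦ hlow t (Set.Icc_subset_Icc (by linarith) le_rfl ht)) (by linarith : θ ≤ θ + κ)
  have hmono : StrictMono A' := strictMono_of_hasDerivAt_pos hA'' hpos
  rw [abs_le] at hclose ⊢
  have hlo := hmono.le_iff_le.mp (by linarith : A' (θ - κ) ≤ A' θ')
  have hhi := hmono.le_iff_le.mp (by linarith : A' θ' ≤ A' (θ + κ))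
  constructor <;> linarith
end
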